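/- Let u, v : ℝ²∖{0} → ℂ be square-integrable K-real functions (Ku = u and Kv = v pointwise). Then ⟨Σ₁^c u, v⟩ = ⟨u, Σ₁^c v⟩ for the L² inner product ⟨f, g⟩ = ∫ f conj(g); in particular the restriction of (1/2)(I + Σ₁^c) to the real Hilbert space L²_K is an orthogonal projector. -/

import Mathlib

/-! The reflection `σ (x, y) = (-x, y)` preserves Lebesgue measure, so `⟨Σ₁^c u, v⟩` is the
integral of `i · conj (u p · v (σ p))`, while `⟨u, Σ₁^c v⟩` is that of `-i · u p · v (σ p)`.
The phase of `σ p` is `-conj` of the phase of `p`, so K-reality of `u` at `p` and of `v` at `σ p`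
makes `u p · v (σ p)` purely imaginary whenever `p ≠ 0`; hence the two integrands agree a.e. -/

open MeasureTheory

noncomputable section

/-- The antilinear operator `K`: `(Ku)(x,y) = ((x+iy)/|x+iy|) · conj(u(x,y))`,
i.e. `Ku = e^{iθ} ū` in polar coordinates. -/
def Kop (u : ℝ × ℝ → ℂ) : ℝ × ℝ → ℂ :=
  fun p => ((p.1 + p.2 * Complex.I) / (‖p.1 + p.2 * Complex.I‖ : ℂ))
    * (starRingEnd ℂ) (u p)

/-- The antilinear symmetry `Σ₁^c = iΓΣ₁`: `(Σ₁^c u)(x,y) = i·conj(u(−x,y))`. -/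
def Sigma1c (u : ℝ × ℝ → ℂ) : ℝ × ℝ → ℂ :=
  fun p => Complex.I * (starRingEnd ℂ) (u (-p.1, p.2))

open ComplexConjugate

theorem integral_comp_neg_fst {G H E : Type*} [MeasurableSpace G] [MeasurableSpace H]
    [AddGroup G] [MeasurableNeg G] [NormedAddCommGroup E] [NormedSpace ℝ E]
    (μ : Measure G) (ν : Measure H) [SFinite μ] [SFinite ν] [μ.IsNegInvariant]
    (f : G × H → E) :
    ∫ p, f (-p.1, p.2) ∂μ.prod ν = ∫ p, f p ∂μ.prod ν :=
  MeasurePreserving.integral_comp' (f := (MeasurableEquiv.neg G).prodCongr (.refl H))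
    ((Measure.measurePreserving_neg μ).prod (.id ν)) f

def phase (p : ℝ × ℝ) : ℂ :=
  (p.1 + p.2 * Complex.I) / (‖p.1 + p.2 * Complex.I‖ : ℂ)

theorem Kop_apply (u : ℝ × ℝ → ℂ) (p : ℝ × ℝ) : Kop u p = phase p * conj (u p) := rfl

theorem phase_neg_fst (p : ℝ × ℝ) : phase (-p.1, p.2) = -conj (phase p) := by
  have : ((-p.1 : ℝ) : ℂ) + p.2 * Complex.I = -conj (p.1 + p.2 * Complex.I) := by
    simp [Complex.ext_iff]
  simp only [phase, this, norm_neg, Complex.norm_conj, map_div₀, Complex.conj_ofReal, neg_div]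

theorem phase_mul_conj {p : ℝ × ℝ} (hp : p ≠ 0) : phase p * conj (phase p) = 1 := by
  have hz : (p.1 : ℂ) + p.2 * Complex.I ≠ 0 := by
    intro h
    apply hp
    simpa [Complex.ext_iff, Prod.ext_iff] using h
  rw [Complex.mul_conj, Complex.normSq_eq_norm_sq, phase, norm_div]
  simp [hz]

theorem mul_comp_neg_fst_eq_neg_conj {u v : ℝ × ℝ → ℂ} {p : ℝ × ℝ} (hp : p ≠ 0)
    (hu : Kop u p = u p) (hv : Kop v (-p.1, p.2) = v (-p.1, p.2)) :
    u p * v (-p.1, p.2) = -conj (u p * v (-p.1, p.2)) :=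
  calc u p * v (-p.1, p.2)
      = phase p * conj (u p) * (-conj (phase p) * conj (v (-p.1, p.2))) := by
        rw [← Kop_apply, hu, ← phase_neg_fst, ← Kop_apply, hv]
    _ = -(phase p * conj (phase p)) * conj (u p * v (-p.1, p.2)) := by rw [map_mul]; ring
    _ = -conj (u p * v (-p.1, p.2)) := by rw [phase_mul_conj hp]; ring

theorem Sigma1c_symmetric_on_L2K_general (u v : ℝ × ℝ → ℂ)
    (hKu : ∀ p : ℝ × ℝ, p ≠ 0 → Kop u p = u p)
    (hKv : ∀ p : ℝ × ℝ, p ≠ 0 → Kop v p = v p) :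
    (∫ p : ℝ × ℝ, Sigma1c u p * (starRingEnd ℂ) (v p))
      = ∫ p : ℝ × ℝ, u p * (starRingEnd ℂ) (Sigma1c v p) := by
  calc (∫ p : ℝ × ℝ, Sigma1c u p * conj (v p))
      = ∫ p : ℝ × ℝ, Complex.I * conj (u p * v (-p.1, p.2)) := by
        rw [Measure.volume_eq_prod, ← integral_comp_neg_fst]
        simp [Sigma1c, mul_assoc]
    _ = ∫ p : ℝ × ℝ, u p * conj (Sigma1c v p) := by
        refine integral_congr_ae ?_
        filter_upwards [Measure.ae_ne volume 0] with p hp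
        have hσp : ((-p.1, p.2) : ℝ × ℝ) ≠ 0 := by simpa [Prod.ext_iff] using hp
        have h := mul_comp_neg_fst_eq_neg_conj hp (hKu p hp) (hKv _ hσp)
        simp only [Sigma1c, map_mul, Complex.conj_I, Complex.conj_conj] at h ⊢
        linear_combination Complex.I * h

/-- For square-integrable K-real functions `u, v`, one has
`⟨Σ₁^c u, v⟩ = ⟨u, Σ₁^c v⟩` for the `L²` inner product `⟨f,g⟩ = ∫ f conj(g)`;
in particular the restriction of `(1/2)(I + Σ₁^c)` to the real Hilbert space
`L²_K` is an orthogonal projector. -/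
theorem Sigma1c_symmetric_on_L2K (u v : ℝ × ℝ → ℂ)
    (hu : MemLp u 2 (volume : Measure (ℝ × ℝ)))
    (hv : MemLp v 2 (volume : Measure (ℝ × ℝ)))
    (hKu : ∀ p : ℝ × ℝ, p ≠ 0 → Kop u p = u p)
    (hKv : ∀ p : ℝ × ℝ, p ≠ 0 → Kop v p = v p) :
    (∫ p : ℝ × ℝ, Sigma1c u p * (starRingEnd ℂ) (v p))
      = ∫ p : ℝ × ℝ, u p * (starRingEnd ℂ) (Sigma1c v p) :=
  Sigma1c_symmetric_on_L2K_general u v hKu hKv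

end
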